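/- arXiv:2006.12332 — 16 statements merged into one kernel-verified Lean document; each statement's English description precedes it below -/
import Mathlib

section
/- If an ideal I of a commutative ring R is contained in the union of a finite family of radical ideals I_1, ..., I_n of R, then I is contained in I_k for some k. -/
/-- Radical avoidance: if an ideal is contained in a finite union of radical
ideals, it is contained in one of them. -/
theorem radical_avoidance {R : Type*} [CommRing R] {n : ℕ}
    (I : Ideal R) (J : Fin n → Ideal R) (hrad : ∀ k, (J k).radical = J k)
    (h : (I : Set R) ⊆ ⋃ k, (J k : Set R)) :
    ∃ k, I ≤ J k := by
  rcases Nat.eq_zero_or_pos n with hn | hn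
  · subst hn
    exfalso
    have := h I.zero_mem
    simp at this
  by_contra hc
  push_neg at hc
  -- choose x k ∈ I \ J k
  have hx : ∀ k, ∃ x, x ∈ I ∧ x ∉ J k := by
    intro k
    rcases Set.not_subset.1 (fun hle => hc k hle) with ⟨x, hxI, hxJ⟩
    exact ⟨x, hxI, hxJ⟩
  choose x hxI hxJ using hx
  -- choose prime p k ⊇ J k with x k ∉ p k
  have hp : ∀ k, ∃ p : Ideal R, p.IsPrime ∧ J k ≤ p ∧ x k ∉ p := by
    intro k
    have : x k ∉ (J k).radical := by rw [hrad k]; exact hxJ k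
    rw [Ideal.radical_eq_sInf] at this
    rw [Submodule.mem_sInf] at this
    push_neg at this
    rcases this with ⟨p, ⟨hle, hprime⟩, hnot⟩
    exact ⟨p, hprime, hle, hnot⟩
  choose p hprime hle hnot using hp
  have hsub : (I : Set R) ⊆ ⋃ i ∈ (↑(Finset.univ : Finset (Fin n)) : Set (Fin n)), (p i : Set R) := by
    intro y hy
    rcases Set.mem_iUnion.1 (h hy) with ⟨k, hk⟩
    simp only [Finset.coe_univ, Set.mem_iUnion]
    exact ⟨k, Set.mem_univ k, hle k hk⟩
  have ⟨a, ha⟩ : Nonempty (Fin n) := ⟨⟨0, hn⟩⟩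
  obtain ⟨i, -, hi⟩ := (Ideal.subset_union_prime (f := p) ⟨0, hn⟩ ⟨0, hn⟩
    (fun i _ _ _ => hprime i)).1 hsub
  exact hnot i (hi (hxI i))
end

section
/- Let I_1, ..., I_n be a finite family of radical ideals of a commutative ring R, let f ∈ R, and let I be an ideal of R such that the ideal Rf + I is not contained in the union of the I_k. Then there exists g ∈ I such that f + g does not belong to any I_k. -/
/-- Davis' prime avoidance. -/
theorem davis_prime_avoidance {R : Type*} [CommRing R] :
    ∀ (n : ℕ) (P : Fin n → Ideal R), (∀ k, (P k).IsPrime) → ∀ (f : R) (I : Ideal R),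
    (∀ g ∈ I, ∃ k, f + g ∈ P k) → ∃ k, Ideal.span {f} ⊔ I ≤ P k := by
  intro n
  induction n with
  | zero =>
    intro P _ f I hcov
    obtain ⟨k, _⟩ := hcov 0 I.zero_mem
    exact k.elim0
  | succ n ih =>
    rcases n with _ | m
    · -- single ideal
      intro P hP f I hcov
      refine ⟨0, sup_le ?_ ?_⟩
      · rw [Ideal.span_le, Set.singleton_subset_iff]
        obtain ⟨k, hk⟩ := hcov 0 I.zero_mem
        have : k = 0 := Fin.eq_zero k
        rw [this] at hk
        simpa using hk
      · intro h hh
        obtain ⟨k, hk⟩ := hcov h hh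
        have hk0 : k = 0 := Fin.eq_zero k
        rw [hk0] at hk
        obtain ⟨k', hk'⟩ := hcov 0 I.zero_mem
        have hk0' : k' = 0 := Fin.eq_zero k'
        rw [hk0'] at hk'
        simp only [add_zero] at hk'
        have := (P 0).sub_mem hk hk'
        simpa using this
    · intro P hP f I hcov
      by_cases hB : ∀ k, ∃ g ∈ I, f + g ∈ P k ∧ ∀ j, j ≠ k → f + g ∉ P j
      · -- irredundant case: derive a contradiction with the cover
        choose g hgI hgmem hgnot using hB
        -- v ∈ I ∩ ⋂_{j ≠ 0} P j with v ∉ P 0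
        set s : Finset (Fin (m + 2)) := Finset.univ.erase 0 with hs
        set v : R := ∏ j ∈ s, (f + g j) * (g j - g 0) with hv
        have hterm_I : ∀ j ∈ s, (f + g j) * (g j - g 0) ∈ I := fun j _ =>
          I.mul_mem_left _ (I.sub_mem (hgI j) (hgI 0))
        have h1s : (1 : Fin (m + 2)) ∈ s := by
          simp [hs, Fin.ext_iff]
        have hvI : v ∈ I := by
          rw [hv, ← Finset.prod_erase_mul s _ h1s]
          exact I.mul_mem_left _ (hterm_I 1 h1s)
        have hvP : ∀ k, k ≠ 0 → v ∈ P k := by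
          intro k hk
          have hks : k ∈ s := by simp [hs, hk]
          rw [hv, ← Finset.prod_erase_mul s _ hks]
          exact (P k).mul_mem_left _ ((P k).mul_mem_right _ (hgmem k))
        have hvnotP0 : v ∉ P 0 := by
          rw [hv]
          refine Finset.prod_induction _ (fun a => a ∉ P 0)
            (fun a b ha hb hab => ?_) (by simpa using (hP 0).ne_top ∘ (Ideal.eq_top_iff_one _).2) ?_
          · rcases (hP 0).mul_mem_iff_mem_or_mem.1 hab with h | h
            · exact ha h
            · exact hb h
          · intro j hj
            have hj0 : j ≠ 0 := by simp [hs] at hj; exact hj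
            intro hmem
            rcases (hP 0).mul_mem_iff_mem_or_mem.1 hmem with h | h
            · exact hgnot j 0 (Ne.symm hj0) h
            · have : f + g j ∈ P 0 := by
                have : (g j - g 0) + (f + g 0) ∈ P 0 := (P 0).add_mem h (hgmem 0)
                convert this using 1; ring
              exact hgnot j 0 (Ne.symm hj0) this
        -- the element f + (g 0 + v) escapes the cover
        obtain ⟨k, hk⟩ := hcov (g 0 + v) (I.add_mem (hgI 0) hvI)
        by_cases hk0 : k = 0
        · rw [hk0] at hk
          have : v ∈ P 0 := by
            have := (P 0).sub_mem hk (hgmem 0)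
            convert this using 1; ring
          exact absurd this hvnotP0
        · have : f + g 0 ∈ P k := by
            have := (P k).sub_mem hk (hvP k hk0)
            convert this using 1; ring
          exact absurd this (hgnot 0 k hk0)
      · -- some ideal P k₀ is redundant
        push_neg at hB
        obtain ⟨k₀, hk₀⟩ := hB
        have hcov' : ∀ g ∈ I, ∃ j : Fin (m + 1), f + g ∈ P (k₀.succAbove j) := by
          intro g hg
          obtain ⟨k, hk⟩ := hcov g hg
          by_cases hkk : k = k₀
          · obtain ⟨j, hj, hjmem⟩ := hk₀ g hg (hkk ▸ hk)
            obtain ⟨i, hi⟩ := Fin.exists_succAbove_eq hj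
            exact ⟨i, hi ▸ hjmem⟩
          · obtain ⟨i, hi⟩ := Fin.exists_succAbove_eq hkk
            exact ⟨i, hi ▸ hk⟩
        obtain ⟨k, hk⟩ := ih (fun j => P (k₀.succAbove j)) (fun j => hP _) f I hcov'
        exact ⟨k₀.succAbove k, hk⟩

/-- Davis' radical avoidance. -/
theorem davis_radical_avoidance {R : Type*} [CommRing R] {n : ℕ}
    (J : Fin n → Ideal R) (hrad : ∀ k, (J k).radical = J k)
    (f : R) (I : Ideal R)
    (h : ¬ ((Ideal.span {f} + I : Ideal R) : Set R) ⊆ ⋃ k, (J k : Set R)) :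
    ∃ g ∈ I, ∀ k, f + g ∉ J k := by
  rw [Set.not_subset] at h
  obtain ⟨x, hx, hx2⟩ := h
  simp only [Set.mem_iUnion, SetLike.mem_coe, not_exists] at hx2
  have key : ∀ k, ∃ P : Ideal R, (J k ≤ P ∧ P.IsPrime) ∧ x ∉ P := by
    intro k
    by_contra hc
    push_neg at hc
    have : x ∈ (J k).radical := by
      rw [Ideal.radical_eq_sInf, Ideal.mem_sInf]
      intro P hP
      exact hc P hP
    rw [hrad k] at this
    exact hx2 k this
  choose P hP hxP using key
  by_contra hcon
  push_neg at hcon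
  obtain ⟨k, hk⟩ := davis_prime_avoidance n P (fun k => (hP k).2) f I
    (fun g hg => (hcon g hg).imp fun k hk => (hP k).1 hk)
  have hxk : x ∈ Ideal.span {f} ⊔ I := by
    rw [← Submodule.add_eq_sup]
    exact hx
  exact hxP k (hk hxk)
end

section
/- Let S be a set of ideals of a commutative ring R such that every subset of S satisfies avoidance, and let T be the set of all (arbitrary) intersections of ideals belonging to S. Then every subset of T satisfies avoidance. -/
/-- A set `S` of ideals satisfies avoidance if any ideal contained in the union
of the ideals of `S` is contained in some member of `S`. -/
def SatisfiesAvoidance {R : Type*} [CommRing R] (S : Set (Ideal R)) : Prop :=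
  ∀ J : Ideal R, (J : Set R) ⊆ (⋃ I ∈ S, (I : Set R)) → ∃ I ∈ S, J ≤ I

/-- If every subset of `S` satisfies avoidance, then every subset of the set `T`
of all intersections of ideals of `S` satisfies avoidance. -/
theorem avoidance_of_intersections {R : Type*} [CommRing R] (S : Set (Ideal R))
    (hS : ∀ S' ⊆ S, SatisfiesAvoidance S') :
    ∀ T' ⊆ {I : Ideal R | ∃ U ⊆ S, I = sInf U}, SatisfiesAvoidance T' := by
  intro T' hT' J hJ
  by_contra h
  push_neg at h
  set W : Set (Ideal R) := {K | K ∈ S ∧ ¬ J ≤ K} with hWdef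
  have hW : W ⊆ S := fun K hK => hK.1
  have hJW : (J : Set R) ⊆ ⋃ K ∈ W, (K : Set R) := by
    intro x hx
    obtain ⟨I, hI, hxI⟩ := Set.mem_iUnion₂.mp (hJ hx)
    obtain ⟨U, hUS, hIU⟩ := hT' hI
    have hex : ∃ K ∈ U, ¬ J ≤ K := by
      by_contra hc
      push_neg at hc
      exact h _ hI (hIU ▸ le_sInf hc)
    obtain ⟨K, hKU, hK⟩ := hex
    have hxK : x ∈ K := by
      have hx2 := hIU ▸ hxI
      exact (Ideal.mem_sInf.mp hx2) hKU
    exact Set.mem_iUnion₂.mpr ⟨K, ⟨hUS hKU, hK⟩, hxK⟩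
  obtain ⟨K, hKW, hJK⟩ := hS W hW J hJW
  exact hKW.2 hJK
end

section
/- If R is a C.P. ring, then every quotient ring R/I is a C.P. ring. -/
/-- A commutative ring is C.P. (compactly packed) if whenever an ideal is
contained in the union of an arbitrary family of prime ideals, it is contained
in one of them. -/
def IsCP (R : Type*) [CommRing R] : Prop :=
  ∀ S : Set (Ideal R), (∀ p ∈ S, p.IsPrime) →
    ∀ I : Ideal R, (I : Set R) ⊆ (⋃ p ∈ S, (p : Set R)) → ∃ p ∈ S, I ≤ p

theorem isCP_quotient (R : Type*) [CommRing R] (h : IsCP R) (I : Ideal R) :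
    IsCP (R ⧸ I) := by
  intro S hS J hJ
  set f := Ideal.Quotient.mk I
  have hsurj : Function.Surjective f := Ideal.Quotient.mk_surjective
  obtain ⟨p, hp, hle⟩ := h (Ideal.comap f '' S)
    (by rintro _ ⟨p, hpS, rfl⟩
        have := hS p hpS
        exact Ideal.IsPrime.comap f)
    (Ideal.comap f J)
    (by
      intro x hx
      have : f x ∈ (J : Set (R ⧸ I)) := hx
      obtain ⟨p, hpmem⟩ := Set.mem_iUnion.mp (hJ this)
      simp only [Set.mem_iUnion] at hpmem
      obtain ⟨hpS, hxp⟩ := hpmem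
      apply Set.mem_iUnion.mpr
      refine ⟨Ideal.comap f p, ?_⟩
      simp only [Set.mem_iUnion]
      exact ⟨⟨p, hpS, rfl⟩, hxp⟩)
  obtain ⟨q, hqS, rfl⟩ := hp
  refine ⟨q, hqS, ?_⟩
  have := Ideal.map_mono (f := f) hle
  rwa [Ideal.map_comap_of_surjective f hsurj, Ideal.map_comap_of_surjective f hsurj] at this
end

section
/- A commutative ring R is a C.P. ring if and only if whenever a prime ideal p of R is contained in the union of an arbitrary family of prime ideals of R, then p is contained in one of them. -/
theorem isCP_iff_prime_avoidance (R : Type*) [CommRing R] :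
    IsCP R ↔ ∀ S : Set (Ideal R), (∀ q ∈ S, q.IsPrime) →
      ∀ p : Ideal R, p.IsPrime → (p : Set R) ⊆ (⋃ q ∈ S, (q : Set R)) →
        ∃ q ∈ S, p ≤ q := by
  constructor
  · intro h S hS p _ hsub
    exact h S hS p hsub
  · intro h S hS I hsub
    set U : Set R := ⋃ p ∈ S, (p : Set R) with hU
    -- Zorn's lemma on ideals contained in U
    obtain ⟨J, hIJ, hJU, hJmax⟩ :
        ∃ J, I ≤ J ∧ Maximal (· ∈ {J : Ideal R | (J : Set R) ⊆ U}) J := by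
      apply zorn_le_nonempty₀
      · intro c hc hchain J₀ hJ₀c
        refine ⟨sSup c, ?_, fun z hz => le_sSup hz⟩
        intro x hx
        rw [SetLike.mem_coe, Submodule.mem_sSup_of_directed ⟨J₀, hJ₀c⟩
          hchain.directedOn] at hx
        obtain ⟨J, hJc, hxJ⟩ := hx
        exact hc hJc hxJ
      · exact hsub
    -- J is prime
    have hJne : J ≠ ⊤ := by
      intro htop
      have h1 : (1 : R) ∈ U := hJU (by simp [htop])
      simp only [hU, Set.mem_iUnion] at h1
      obtain ⟨q, hq, h1q⟩ := h1
      exact (hS q hq).ne_top ((Ideal.eq_top_iff_one q).2 h1q)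
    have hJprime : J.IsPrime := by
      refine ⟨hJne, ?_⟩
      intro a b hab
      by_contra hcon
      push_neg at hcon
      obtain ⟨ha, hb⟩ := hcon
      -- J + (a) is strictly larger than J, hence not contained in U
      have key : ∀ z : R, z ∉ J → ∃ x, x ∈ J ⊔ Ideal.span {z} ∧ x ∉ U := by
        intro z hz
        by_contra hcn
        push_neg at hcn
        have hle : J ⊔ Ideal.span {z} ≤ J :=
          hJmax (fun x hx => hcn x hx) le_sup_left
        exact hz (hle (le_sup_right (a := J) (Ideal.mem_span_singleton_self z)))
      obtain ⟨x, hxmem, hxU⟩ := key a ha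
      obtain ⟨y, hymem, hyU⟩ := key b hb
      obtain ⟨j₁, hj₁, a', ha', hx⟩ := Submodule.mem_sup.1 hxmem
      obtain ⟨j₂, hj₂, b', hb', hy⟩ := Submodule.mem_sup.1 hymem
      obtain ⟨r, hr⟩ := Ideal.mem_span_singleton'.1 ha'
      obtain ⟨s, hs⟩ := Ideal.mem_span_singleton'.1 hb'
      have hxy : x * y ∈ J := by
        rw [← hx, ← hy, ← hr, ← hs]
        have : (j₁ + r * a) * (j₂ + s * b)
            = j₁ * j₂ + j₁ * (s * b) + (r * a) * j₂ + (r * s) * (a * b) := by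
          ring
        rw [this]
        exact J.add_mem (J.add_mem (J.add_mem (J.mul_mem_right _ hj₁)
          (J.mul_mem_right _ hj₁)) (J.mul_mem_left _ hj₂))
          (J.mul_mem_left _ hab)
      have hxyU : x * y ∈ U := hJU hxy
      simp only [hU, Set.mem_iUnion] at hxyU
      obtain ⟨q, hq, hxyq⟩ := hxyU
      rcases (hS q hq).mem_or_mem hxyq with h' | h'
      · exact hxU (Set.mem_iUnion.2 ⟨q, Set.mem_iUnion.2 ⟨hq, h'⟩⟩)
      · exact hyU (Set.mem_iUnion.2 ⟨q, Set.mem_iUnion.2 ⟨hq, h'⟩⟩)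
    obtain ⟨q, hq, hJq⟩ := h S hS J hJprime hJU
    exact ⟨q, hq, hIJ.trans hJq⟩
end

section
/- A commutative ring R is a C.P. ring if and only if every radical ideal of R is the radical of a principal ideal. -/
theorem isCP_iff_radical_of_principal (R : Type*) [CommRing R] :
    IsCP R ↔ ∀ I : Ideal R, I.radical = I →
      ∃ f : R, (Ideal.span {f}).radical = I := by
  constructor
  · intro hCP I hI
    by_contra h
    push_neg at h
    set S : Set (Ideal R) := {p | p.IsPrime ∧ ¬ I ≤ p} with hS
    have hsub : (I : Set R) ⊆ ⋃ p ∈ S, (p : Set R) := by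
      intro f hf
      have hle : (Ideal.span {f}).radical ≤ I := by
        rw [← hI]
        exact Ideal.radical_mono (Ideal.span_le.2 (by simpa using hf))
      have hnle : ¬ I ≤ (Ideal.span {f}).radical :=
        fun hle' => h f (le_antisymm hle hle')
      rw [Ideal.radical_eq_sInf] at hnle
      simp only [le_sInf_iff, Set.mem_setOf_eq, not_forall] at hnle
      obtain ⟨p, ⟨hsp, hprime⟩, hIp⟩ := hnle
      exact Set.mem_iUnion₂.2 ⟨p, ⟨hprime, hIp⟩, hsp (Ideal.subset_span rfl)⟩
    obtain ⟨p, hpS, hIp⟩ := hCP S (fun p hp => hp.1) I hsub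
    exact hpS.2 hIp
  · intro h S hS I hI
    obtain ⟨f, hf⟩ := h I.radical (Ideal.radical_idem I)
    have hfI : f ∈ I.radical := by
      rw [← hf]; exact Ideal.le_radical (Ideal.subset_span rfl)
    obtain ⟨n, hn⟩ := hfI
    obtain ⟨p, hpS, hmem⟩ := Set.mem_iUnion₂.1 (hI hn)
    have hp := hS p hpS
    have hfp : f ∈ p := hp.mem_of_pow_mem n hmem
    refine ⟨p, hpS, le_trans Ideal.le_radical ?_⟩
    rw [← hf]
    exact hp.radical_le_iff.2 (Ideal.span_le.2 (by simpa using hfp))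
end

section
/- A commutative ring R is a C.P. ring if and only if whenever an ideal I of R is contained in the union of an arbitrary family of radical ideals of R, then I is contained in one of them. -/
lemma IsCP.exists_radical_eq {R : Type*} [CommRing R] (h : IsCP R) (I : Ideal R) :
    ∃ x ∈ I, I.radical = (Ideal.span {x}).radical := by
  by_contra hc
  push_neg at hc
  have key : ∀ x ∈ I, ∃ p : Ideal R, p.IsPrime ∧ x ∈ p ∧ ¬ I ≤ p := by
    intro x hx
    have h1 : (Ideal.span {x}).radical ≤ I.radical :=
      Ideal.radical_mono (Ideal.span_le.mpr (by simpa using hx))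
    have h2 : ¬ I ≤ (Ideal.span {x}).radical := by
      intro hI
      have : I.radical ≤ (Ideal.span {x}).radical := by
        have := Ideal.radical_mono hI
        rwa [Ideal.radical_idem] at this
      exact hc x hx (le_antisymm this h1)
    rw [Ideal.radical_eq_sInf] at h2
    have h3 : ¬ ∀ p ∈ {J : Ideal R | Ideal.span {x} ≤ J ∧ J.IsPrime}, I ≤ p := by
      intro hall
      exact h2 (le_sInf hall)
    push_neg at h3
    obtain ⟨p, ⟨hsp, hp⟩, hnle⟩ := h3
    exact ⟨p, hp, hsp (Ideal.subset_span rfl), hnle⟩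
  choose! p hp1 hp2 hp3 using key
  have := h (p '' (I : Set R)) (by rintro q ⟨x, hx, rfl⟩; exact hp1 x hx) I
    (fun y hy => Set.mem_biUnion ⟨y, hy, rfl⟩ (hp2 y hy))
  obtain ⟨q, ⟨x, hx, rfl⟩, hle⟩ := this
  exact hp3 x hx hle

theorem isCP_iff_radical_avoidance (R : Type*) [CommRing R] :
    IsCP R ↔ ∀ S : Set (Ideal R), (∀ J ∈ S, J.radical = J) →
      ∀ I : Ideal R, (I : Set R) ⊆ (⋃ J ∈ S, (J : Set R)) → ∃ J ∈ S, I ≤ J := by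
  constructor
  · intro h S hS I hI
    obtain ⟨x, hxI, hrad⟩ := h.exists_radical_eq I
    obtain ⟨J, hJ, hxJ⟩ := Set.mem_iUnion₂.mp (hI hxI)
    refine ⟨J, hJ, ?_⟩
    calc I ≤ I.radical := Ideal.le_radical
    _ = (Ideal.span {x}).radical := hrad
    _ ≤ J.radical := Ideal.radical_mono (Ideal.span_le.mpr (by simpa using hxJ))
    _ = J := hS J hJ
  · intro h S hS I hI
    exact h S (fun J hJ => (hS J hJ).radical) I hI
end

section
/- If every radical ideal of a commutative ring R is the radical of a principal ideal, then the prime spectrum Spec(R) is a Noetherian topological space (in the Zariski topology). -/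
/-- If every radical ideal is the radical of a principal ideal, then the
prime spectrum is a Noetherian space in the Zariski topology. -/
theorem noetherianSpace_of_radical_principal (R : Type*) [CommRing R]
    (h : ∀ I : Ideal R, I.radical = I → ∃ f : R, (Ideal.span {f}).radical = I) :
    TopologicalSpace.NoetherianSpace (PrimeSpectrum R) := by
  rw [TopologicalSpace.noetherianSpace_iff_opens]
  intro s
  have hc : IsClosed ((s : Set (PrimeSpectrum R))ᶜ) := s.isOpen.isClosed_compl
  rw [PrimeSpectrum.isClosed_iff_zeroLocus_radical_ideal] at hc
  obtain ⟨I, hrad, hI⟩ := hc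
  obtain ⟨f, hf⟩ := h I hrad.radical
  have : (s : Set (PrimeSpectrum R)) = PrimeSpectrum.basicOpen f := by
    rw [PrimeSpectrum.basicOpen_eq_zeroLocus_compl, ← PrimeSpectrum.zeroLocus_span,
      ← PrimeSpectrum.zeroLocus_radical, hf, ← hI, compl_compl]
  rw [this]
  exact PrimeSpectrum.isCompact_basicOpen f
end

section
/- A Noetherian C.P. ring has Krull dimension at most 1. -/
set_option maxHeartbeats 1600000
set_option synthInstance.maxHeartbeats 1000000

/-- Transfer Artinianness along a surjective scalar map. -/
theorem isArtinian_of_tower_of_surjective {A B M : Type*} [CommRing A] [CommRing B] [Algebra A B]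
    [AddCommGroup M] [Module A M] [Module B M] [IsScalarTower A B M]
    (hs : Function.Surjective (algebraMap A B)) (h : IsArtinian B M) : IsArtinian A M := by
  let g : Submodule A M → Submodule B M := fun N =>
    { carrier := N
      add_mem' := fun ha hb => N.add_mem ha hb
      zero_mem' := N.zero_mem
      smul_mem' := by
        intro c x hx
        obtain ⟨a, rfl⟩ := hs c
        rw [algebraMap_smul]
        exact N.smul_mem a hx }
  exact ⟨Subrelation.wf
    (fun {N N'} hNN' => show g N < g N' from
      SetLike.lt_iff_le_and_exists.mpr (by
        obtain ⟨hle, x, hx1, hx2⟩ := SetLike.lt_iff_le_and_exists.mp hNN'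
        exact ⟨fun y hy => hle hy, x, hx1, hx2⟩))
    (InvImage.wf g IsWellFounded.wf)⟩

theorem isArtinian_of_torsion_by_maximal {B M : Type*} [CommRing B] [AddCommGroup M]
    [Module B M] (m : Ideal B) [m.IsMaximal] [IsNoetherian B M]
    (h : Module.IsTorsionBySet B M (m : Set B)) : IsArtinian B M := by
  letI : Module (B ⧸ m) M := h.module
  haveI : IsScalarTower B (B ⧸ m) M := h.isScalarTower
  letI : Field (B ⧸ m) := Ideal.Quotient.field m
  haveI : Module.Finite B M := ⟨IsNoetherian.noetherian ⊤⟩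
  haveI : Module.Finite (B ⧸ m) M := Module.Finite.of_restrictScalars_finite B (B ⧸ m) M
  haveI : IsArtinian (B ⧸ m) M := inferInstance
  exact isArtinian_of_tower_of_surjective
    (by rw [Ideal.Quotient.algebraMap_eq]; exact Ideal.Quotient.mk_surjective) this

theorem isArtinianRing_of_pow_maximal_eq_bot {B : Type*} [CommRing B] [IsNoetherianRing B]
    (m : Ideal B) [m.IsMaximal] (k : ℕ) (hk : m ^ k = ⊥) : IsArtinianRing B := by
  have key : ∀ i : ℕ, IsArtinian B (B ⧸ (m ^ i : Ideal B)) := by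
    intro i
    induction i with
    | zero =>
      have : Subsingleton (B ⧸ (m ^ 0 : Ideal B)) := by
        rw [pow_zero, Ideal.one_eq_top]
        exact Submodule.Quotient.subsingleton_iff.mpr rfl
      infer_instance
    | succ i ih =>
      set S : Submodule B (B ⧸ (m ^ (i + 1) : Ideal B)) :=
        Submodule.map (m ^ (i + 1) : Ideal B).mkQ (m ^ i : Ideal B) with hS
      have htor : Module.IsTorsionBySet B S (m : Set B) := by
        intro x a
        ext
        obtain ⟨x, hx⟩ := x
        obtain ⟨y, hy, rfl⟩ := hx
        show (a : B) • (m ^ (i + 1) : Ideal B).mkQ y = 0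
        rw [← map_smul, Submodule.mkQ_apply, Submodule.Quotient.mk_eq_zero]
        have h2 : (a : B) • y = y * (a : B) := by rw [smul_eq_mul, mul_comm]
        rw [h2, pow_succ]
        exact Ideal.mul_mem_mul hy a.2
      haveI hartS : IsArtinian B S := isArtinian_of_torsion_by_maximal m htor
      have hle : (m ^ (i + 1) : Ideal B) ≤ (m ^ i : Ideal B) :=
        Ideal.pow_le_pow_right (Nat.le_succ i)
      let e := Submodule.quotientQuotientEquivQuotient (m ^ (i + 1) : Ideal B)
        (m ^ i : Ideal B) hle
      haveI : IsArtinian B ((B ⧸ (m ^ (i + 1) : Ideal B)) ⧸ S) :=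
        isArtinian_of_injective e.toLinearMap e.injective
      exact isArtinian_of_range_eq_ker S.subtype S.mkQ
        (by rw [Submodule.range_subtype, Submodule.ker_mkQ])
  have e := Submodule.quotEquivOfEqBot (m ^ k : Ideal B) hk
  haveI := key k
  exact isArtinian_of_surjective _ e.toLinearMap e.surjective

theorem no_three_chain {R : Type*} [CommRing R] [IsNoetherianRing R] (hcp : IsCP R)
    {p0 p1 p2 : Ideal R} (h0 : p0.IsPrime) (h1 : p1.IsPrime) (h2 : p2.IsPrime)
    (h01 : p0 < p1) (h12 : p1 < p2) : False := by
  -- Step 1: choose x in p2 avoiding every prime strictly below p2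
  obtain ⟨x, hxp2, hx⟩ : ∃ x ∈ p2, ∀ q : Ideal R, q.IsPrime → q < p2 → x ∉ q := by
    by_contra hc
    push_neg at hc
    obtain ⟨q, hq, hle⟩ := hcp {q | q.IsPrime ∧ q < p2} (fun q hq => hq.1) p2
      (fun z hz => by
        obtain ⟨q, hqp, hqlt, hzq⟩ := hc z hz
        exact Set.mem_biUnion (⟨hqp, hqlt⟩ : _ ∧ _) hzq)
    exact absurd hle (not_le_of_gt hq.2)
  -- Step 2: localize at p2
  haveI := h2
  set A := Localization.AtPrime p2 with hA
  set φ := algebraMap R A with hφ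
  haveI hanoeth : IsNoetherianRing A := IsLocalization.isNoetherianRing p2.primeCompl A ‹_›
  set m := IsLocalRing.maximalIdeal A with hm
  have hmmap : p2.map φ = m := Localization.AtPrime.map_eq_maximalIdeal
  -- Step 3: the primes downstairs
  have hd1 : Disjoint (p2.primeCompl : Set R) (p1 : Set R) :=
    Set.disjoint_left.mpr fun a ha ha1 => ha (h12.le ha1)
  have hd0 : Disjoint (p2.primeCompl : Set R) (p0 : Set R) :=
    Set.disjoint_left.mpr fun a ha ha0 => ha (h12.le (h01.le ha0))
  set q := p1.map φ with hqdef
  set r := p0.map φ with hrdef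
  haveI hq : q.IsPrime := IsLocalization.isPrime_of_isPrime_disjoint p2.primeCompl A p1 h1 hd1
  haveI hr : r.IsPrime := IsLocalization.isPrime_of_isPrime_disjoint p2.primeCompl A p0 h0 hd0
  have hqc : q.comap φ = p1 := IsLocalization.comap_map_of_isPrime_disjoint p2.primeCompl A h1 hd1
  have hrc : r.comap φ = p0 := IsLocalization.comap_map_of_isPrime_disjoint p2.primeCompl A h0 hd0
  have hrq : r < q := lt_of_le_of_ne (Ideal.map_mono h01.le)
    (fun e => h01.ne (by rw [← hrc, ← hqc, e]))
  set y := φ x with hy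
  have hym : y ∈ m := hmmap ▸ Ideal.mem_map_of_mem φ hxp2
  have hynq : y ∉ q := fun hyq => hx p1 h1 h12 (hqc ▸ Ideal.mem_comap.mpr hyq)
  -- Step 4: every prime of A containing y is m
  have hP : ∀ P : Ideal A, P.IsPrime → y ∈ P → P = m := by
    intro P hPp hyP
    have hPle : P ≤ m := IsLocalRing.le_maximalIdeal hPp.ne_top
    have hcle : P.comap φ ≤ p2 := by
      have : P.comap φ ≤ m.comap φ := Ideal.comap_mono hPle
      exact this.trans_eq Localization.AtPrime.comap_maximalIdeal
    haveI hcprime : (P.comap φ).IsPrime := hPp.comap φ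
    have hxin : x ∈ P.comap φ := hyP
    have hc2 : P.comap φ = p2 := by
      by_contra hne
      exact hx _ hcprime (lt_of_le_of_ne hcle hne) hxin
    rw [← IsLocalization.map_comap p2.primeCompl A P]
    exact (congrArg (Ideal.map φ) hc2).trans hmmap
  -- Step 5: m ^ k ≤ span {y}
  have hspan_le : Ideal.span {y} ≤ m := Ideal.span_le.mpr (Set.singleton_subset_iff.mpr hym)
  have hrad : (Ideal.span {y}).radical = m := by
    rw [Ideal.radical_eq_sInf]
    apply le_antisymm
    · exact sInf_le ⟨hspan_le, (IsLocalRing.maximalIdeal.isMaximal A).isPrime⟩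
    · refine le_sInf fun J hJ => ?_
      rcases hJ with ⟨hJle, hJprime⟩
      exact (hP J hJprime (hJle (Ideal.subset_span rfl))).ge
  obtain ⟨k, hk⟩ := Ideal.exists_radical_pow_le_of_fg (Ideal.span {y}) (IsNoetherian.noetherian _)
  rw [hrad] at hk
  -- Step 6: B = A / (y) is Artinian
  set B := A ⧸ Ideal.span {y} with hB
  set mkB := Ideal.Quotient.mk (Ideal.span {y}) with hmkB
  have hker : RingHom.ker mkB = Ideal.span {y} := Ideal.mk_ker
  have hcb : Ideal.comap mkB ⊥ = Ideal.span {y} := by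
    rw [← RingHom.ker_eq_comap_bot, hker]
  have hcm : (m.map mkB).comap mkB = m := by
    rw [Ideal.comap_map_of_surjective mkB Ideal.Quotient.mk_surjective, hcb,
      sup_eq_left.mpr hspan_le]
  have hmBne : m.map mkB ≠ ⊤ := fun e => (IsLocalRing.maximalIdeal.isMaximal A).ne_top
    (show m = ⊤ by rw [← hcm, e, Ideal.comap_top])
  haveI hmBmax : (m.map mkB).IsMaximal := by
    rcases Ideal.map_eq_top_or_isMaximal_of_surjective mkB Ideal.Quotient.mk_surjective
      (IsLocalRing.maximalIdeal.isMaximal A) with h | h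
    · exact absurd h hmBne
    · exact h
  have hmBpow : (m.map mkB) ^ k = ⊥ := by
    rw [← Ideal.map_pow, Ideal.map_eq_bot_iff_le_ker, hker]
    exact hk
  haveI : IsArtinianRing B := isArtinianRing_of_pow_maximal_eq_bot (m.map mkB) k hmBpow
  haveI hAB : IsArtinian A B := isArtinian_of_tower_of_surjective
    (by rw [Ideal.Quotient.algebraMap_eq]; exact Ideal.Quotient.mk_surjective) ‹IsArtinianRing B›
  -- Step 7: symbolic powers of q
  set Aq := Localization.AtPrime q with hAq
  set ψ := algebraMap A Aq with hψ
  set I : ℕ → Ideal A := fun n => ((q ^ n).map ψ).comap ψ with hI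
  have hIanti : ∀ {a b : ℕ}, a ≤ b → I b ≤ I a := fun {a b} hab =>
    Ideal.comap_mono (Ideal.map_mono (Ideal.pow_le_pow_right hab))
  -- the chain in B stabilizes
  set F : ℕ →o (Submodule A B)ᵒᵈ :=
    ⟨fun n => OrderDual.toDual (Submodule.restrictScalars A ((I n).map mkB)),
     fun a b hab => OrderDual.toDual_le_toDual.mpr
       (fun z hz => Ideal.map_mono (hIanti hab) hz)⟩ with hF
  obtain ⟨n, hn⟩ := IsArtinian.monotone_stabilizes F
  have hJeq : (I n).map mkB = (I (n + 1)).map mkB := by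
    have := hn (n + 1) (Nat.le_succ n)
    have h2 : Submodule.restrictScalars A ((I n).map mkB)
        = Submodule.restrictScalars A ((I (n + 1)).map mkB) := congrArg OrderDual.ofDual this
    exact Submodule.restrictScalars_injective A _ _ h2
  -- Step 8: I n ≤ I (n+1) ⊔ m • I n
  have hyunit : IsUnit (ψ y) := IsLocalization.map_units Aq (⟨y, hynq⟩ : q.primeCompl)
  have hstep : I n ≤ I (n + 1) ⊔ m • I n := by
    intro a ha
    have h1 : a ∈ I (n + 1) ⊔ Ideal.span {y} := by
      have : a ∈ ((I n).map mkB).comap mkB := Ideal.le_comap_map ha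
      rw [hJeq, Ideal.comap_map_of_surjective mkB Ideal.Quotient.mk_surjective, hcb] at this
      exact this
    obtain ⟨b, hb, z, hz, rfl⟩ := Submodule.mem_sup.mp h1
    obtain ⟨c, rfl⟩ := Ideal.mem_span_singleton'.mp hz
    have hcy : c * y ∈ I n := by
      have : b ∈ I n := hIanti (Nat.le_succ n) hb
      have h3 : b + c * y - b ∈ I n := Ideal.sub_mem _ ha this
      simpa using h3
    have hc : c ∈ I n := by
      have h4 : ψ (c * y) ∈ (q ^ n).map ψ := hcy
      rw [map_mul] at h4
      obtain ⟨u, hu⟩ := hyunit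
      rw [← hu] at h4
      have h5 := Ideal.mul_mem_right (↑u⁻¹ : Aq) _ h4
      rwa [Units.mul_inv_cancel_right] at h5
    refine Submodule.add_mem _ (Submodule.mem_sup_left hb) (Submodule.mem_sup_right ?_)
    rw [Ideal.smul_eq_mul]
    rw [mul_comm c y]
    exact Ideal.mul_mem_mul hym hc
  -- Step 9: Nakayama gives I n = I (n+1)
  have hjac : m ≤ Ideal.jacobson ⊥ := by
    rw [IsLocalRing.jacobson_eq_maximalIdeal (⊥ : Ideal A) bot_ne_top]
  have hInle : I n ≤ I (n + 1) :=
    Submodule.le_of_le_smul_of_le_jacobson_bot (IsNoetherian.noetherian _) hjac hstep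
  have hIeq : I n = I (n + 1) := le_antisymm hInle (hIanti (Nat.le_succ n))
  -- Step 10: Q^n = Q^(n+1) in Aq, then Q^n = 0
  have hQeq : (q ^ n).map ψ = (q ^ (n + 1)).map ψ := by
    rw [← IsLocalization.map_comap q.primeCompl Aq ((q ^ n).map ψ),
      ← IsLocalization.map_comap q.primeCompl Aq ((q ^ (n + 1)).map ψ)]
    exact congrArg (Ideal.map ψ) hIeq
  haveI hAqnoeth : IsNoetherianRing Aq := IsLocalization.isNoetherianRing q.primeCompl Aq hanoeth
  have hmp : ∀ j : ℕ, (q ^ j).map ψ = (q.map ψ) ^ j := fun j => Ideal.map_pow ψ q j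
  have hQmax : q.map ψ = IsLocalRing.maximalIdeal Aq := Localization.AtPrime.map_eq_maximalIdeal
  have hQbot : (q.map ψ) ^ n = ⊥ := by
    apply Submodule.eq_bot_of_le_smul_of_le_jacobson_bot (q.map ψ) ((q.map ψ) ^ n)
      (IsNoetherian.noetherian _)
    · calc (q.map ψ) ^ n = (q ^ n).map ψ := (hmp n).symm
        _ = (q ^ (n + 1)).map ψ := hQeq
        _ = (q.map ψ) ^ (n + 1) := hmp (n + 1)
        _ = (q.map ψ) • (q.map ψ) ^ n := by
            rw [Ideal.smul_eq_mul, pow_succ, mul_comm]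
        _ ≤ (q.map ψ) • (q.map ψ) ^ n := le_rfl
    · rw [IsLocalRing.jacobson_eq_maximalIdeal (⊥ : Ideal Aq) bot_ne_top, hQmax]
  -- Step 11: contradiction
  have hker2 : ∀ a : A, ψ a = 0 → a ∈ r := by
    intro a ha
    obtain ⟨s, hs⟩ := (IsLocalization.map_eq_zero_iff q.primeCompl Aq a).mp ha
    have : (s : A) * a ∈ r := by rw [hs]; exact r.zero_mem
    rcases hr.mem_or_mem this with h | h
    · exact absurd (hrq.le h) s.2
    · exact h
  have hqn_le_r : q ^ n ≤ r := by
    intro a ha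
    apply hker2
    have h7 : ψ a ∈ (q ^ n).map ψ := Ideal.mem_map_of_mem ψ ha
    rw [hmp n, hQbot] at h7
    exact (Submodule.mem_bot Aq).mp h7
  have hq_le_r : q ≤ r := by
    rcases Nat.eq_zero_or_pos n with rfl | hpos
    · rw [pow_zero, Ideal.one_eq_top] at hqn_le_r
      exact absurd (top_le_iff.mp hqn_le_r) hr.ne_top
    · intro a ha
      exact hr.mem_of_pow_mem n (hqn_le_r (Ideal.pow_mem_pow ha n))
  exact absurd hq_le_r (not_le_of_gt hrq)

/-- A Noetherian C.P. ring has Krull dimension at most 1. -/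
theorem krullDim_le_one_of_noetherian_isCP (R : Type*) [CommRing R]
    [IsNoetherianRing R] (h : IsCP R) : ringKrullDim R ≤ 1 := by
  refine iSup_le fun p => ?_
  have hlen : p.length ≤ 1 := by
    by_contra hgt
    push_neg at hgt
    have h2 : 2 ≤ p.length := hgt
    have hc01 : p.toFun ⟨0, by omega⟩ < p.toFun ⟨1, by omega⟩ :=
      p.strictMono (Fin.mk_lt_mk.mpr (by omega))
    have hc12 : p.toFun ⟨1, by omega⟩ < p.toFun ⟨2, by omega⟩ :=
      p.strictMono (Fin.mk_lt_mk.mpr (by omega))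
    exact no_three_chain h
      (p.toFun ⟨0, by omega⟩).isPrime (p.toFun ⟨1, by omega⟩).isPrime
      (p.toFun ⟨2, by omega⟩).isPrime
      ((PrimeSpectrum.asIdeal_lt_asIdeal _ _).mpr hc01)
      ((PrimeSpectrum.asIdeal_lt_asIdeal _ _).mpr hc12)
  exact_mod_cast hlen
end

section
/- If R/N is a P.Z. ring, where N is the nilradical of R, then R is a P.Z. ring. -/
/-- A commutative ring is P.Z. (properly zipped) if whenever a prime ideal
contains the intersection of an arbitrary family of prime ideals, it contains
one of them. -/
def IsPZ (R : Type*) [CommRing R] : Prop :=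
  ∀ S : Set (Ideal R), (∀ q ∈ S, q.IsPrime) →
    ∀ p : Ideal R, p.IsPrime → sInf S ≤ p → ∃ q ∈ S, q ≤ p

theorem isPZ_of_quotient_nilradical (R : Type*) [CommRing R]
    (h : IsPZ (R ⧸ nilradical R)) : IsPZ R := by
  intro S hS p hp hle
  set π := Ideal.Quotient.mk (nilradical R)
  have hπ : Function.Surjective π := Ideal.Quotient.mk_surjective
  have hker : RingHom.ker π = nilradical R := Ideal.mk_ker
  have hnil : ∀ q : Ideal R, q.IsPrime → nilradical R ≤ q := fun q hq =>
    nilradical_le_prime q (H := hq)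
  have hnk : ∀ q : Ideal R, q.IsPrime → RingHom.ker π ≤ q := fun q hq =>
    hker.le.trans (hnil q hq)
  have hcm : ∀ q : Ideal R, q.IsPrime → Ideal.comap π (Ideal.map π q) = q := by
    intro q hq
    rw [Ideal.comap_map_of_surjective' π hπ, sup_eq_left.mpr (hnk q hq)]
  -- image family
  set S' : Set (Ideal (R ⧸ nilradical R)) := (Ideal.map π) '' S
  have hS' : ∀ q' ∈ S', q'.IsPrime := by
    rintro q' ⟨q, hq, rfl⟩
    haveI := hS q hq
    exact Ideal.map_isPrime_of_surjective hπ (hnk q (hS q hq))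
  have hp' : (Ideal.map π p).IsPrime :=
    Ideal.map_isPrime_of_surjective hπ (hnk p hp)
  have hle' : sInf S' ≤ Ideal.map π p := by
    have h1 : Ideal.comap π (sInf S') ≤ Ideal.comap π (Ideal.map π p) := by
      rw [hcm p hp]
      refine le_trans ?_ hle
      intro x hx
      rw [Ideal.mem_sInf]
      intro q hq
      have hx' : π x ∈ Ideal.map π q :=
        Ideal.mem_sInf.mp hx (Set.mem_image_of_mem _ hq)
      rw [← hcm q (hS q hq)]
      exact hx'
    calc sInf S' = Ideal.map π (Ideal.comap π (sInf S')) :=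
          (Ideal.map_comap_of_surjective π hπ _).symm
      _ ≤ Ideal.map π (Ideal.comap π (Ideal.map π p)) := Ideal.map_mono h1
      _ = Ideal.map π p := Ideal.map_comap_of_surjective π hπ _
  obtain ⟨q', ⟨q, hq, rfl⟩, hqle⟩ := h S' hS' _ hp' hle'
  refine ⟨q, hq, ?_⟩
  have := Ideal.comap_mono (f := π) hqle
  rwa [hcm q (hS q hq), hcm p hp] at this
end

section
/- A commutative ring R is a P.Z. ring if and only if for every prime ideal p of R there exists f ∈ R such that the set Λ(p) of prime ideals contained in p equals the basic Zariski-open set D(f) = {q ∈ Spec(R) : f ∉ q}. -/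
theorem isPZ_iff_lambda_eq_basicOpen (R : Type*) [CommRing R] :
    IsPZ R ↔ ∀ p : PrimeSpectrum R, ∃ f : R,
      {q : PrimeSpectrum R | q.asIdeal ≤ p.asIdeal}
        = {q : PrimeSpectrum R | f ∉ q.asIdeal} := by
  constructor
  · intro hpz p
    set S : Set (Ideal R) := {q : Ideal R | q.IsPrime ∧ ¬ q ≤ p.asIdeal} with hS
    have hnot : ¬ ∃ q ∈ S, q ≤ p.asIdeal := by
      rintro ⟨q, hq, hle⟩
      exact hq.2 hle
    have hinf : ¬ sInf S ≤ p.asIdeal := fun h =>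
      hnot (hpz S (fun q hq => hq.1) p.asIdeal p.isPrime h)
    obtain ⟨f, hfS, hfp⟩ := Set.not_subset.mp hinf
    refine ⟨f, ?_⟩
    ext q
    simp only [Set.mem_setOf_eq]
    constructor
    · intro hle hf
      exact hfp (hle hf)
    · intro hf
      by_contra hle
      exact hf (Submodule.mem_sInf.mp hfS q.asIdeal ⟨q.isPrime, hle⟩)
  · intro h S hSprime p hp hinf
    obtain ⟨f, hf⟩ := h ⟨p, hp⟩
    have hfp : f ∉ p := by
      have : (⟨p, hp⟩ : PrimeSpectrum R) ∈
          {q : PrimeSpectrum R | q.asIdeal ≤ p} := le_refl p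
      rw [hf] at this
      exact this
    by_contra hnone
    push_neg at hnone
    have hfall : f ∈ sInf S := by
      apply Submodule.mem_sInf.mpr
      intro q hq
      by_contra hfq
      have : (⟨q, hSprime q hq⟩ : PrimeSpectrum R) ∈
          {q : PrimeSpectrum R | f ∉ q.asIdeal} := hfq
      rw [← hf] at this
      exact hnone q hq this
    exact hfp (hinf hfall)
end

section
/- A commutative ring R is a P.Z. ring if and only if arbitrary intersections of Zariski-open subsets of Spec(R) are Zariski-open. -/
theorem isPZ_iff_sInter_open (R : Type*) [CommRing R] :
    IsPZ R ↔ ∀ 𝒰 : Set (Set (PrimeSpectrum R)),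
      (∀ U ∈ 𝒰, IsOpen U) → IsOpen (⋂₀ 𝒰) := by
  constructor
  · intro h 𝒰 h𝒰
    rw [← isClosed_compl_iff, Set.compl_sInter]
    set T : Set (PrimeSpectrum R) := ⋃₀ (compl '' 𝒰) with hT
    rw [← closure_subset_iff_isClosed]
    intro p hp
    rw [← PrimeSpectrum.zeroLocus_vanishingIdeal_eq_closure,
      PrimeSpectrum.mem_zeroLocus] at hp
    obtain ⟨q, hqS, hqp⟩ := h (PrimeSpectrum.asIdeal '' T)
      (by rintro _ ⟨x, -, rfl⟩; exact x.isPrime) p.asIdeal p.isPrime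
      (by
        rw [sInf_image]
        exact fun f hf => hp ((PrimeSpectrum.mem_vanishingIdeal T f).mpr
          (by simpa [Ideal.mem_iInf] using hf)))
    obtain ⟨x, hxT, rfl⟩ := hqS
    obtain ⟨V, ⟨U, hU𝒰, rfl⟩, hxV⟩ := hxT
    refine Set.mem_sUnion.mpr ⟨Uᶜ, ⟨U, hU𝒰, rfl⟩, ?_⟩
    have hclosed : IsClosed (Uᶜ) := (h𝒰 U hU𝒰).isClosed_compl
    exact hclosed.stableUnderSpecialization
      ((PrimeSpectrum.le_iff_specializes x p).mp hqp) hxV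
  · intro h S hS p hp hle
    set T : Set (PrimeSpectrum R) := {x | x.asIdeal ∈ S} with hT
    set C : Set (PrimeSpectrum R) := ⋃ q ∈ S, PrimeSpectrum.zeroLocus (q : Set R) with hC
    have hCclosed : IsClosed C := by
      rw [← isOpen_compl_iff, hC, Set.compl_iUnion₂]
      have : (⋂ q ∈ S, (PrimeSpectrum.zeroLocus (q : Set R))ᶜ) =
          ⋂₀ ((fun q : Ideal R => (PrimeSpectrum.zeroLocus (q : Set R))ᶜ) '' S) := by
        rw [Set.sInter_image]
      rw [this]
      exact h _ (by rintro _ ⟨q, -, rfl⟩; exact (PrimeSpectrum.isClosed_zeroLocus _).isOpen_compl)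
    have hpC : (⟨p, hp⟩ : PrimeSpectrum R) ∈ C := by
      have h1 : (⟨p, hp⟩ : PrimeSpectrum R) ∈ closure T := by
        rw [← PrimeSpectrum.zeroLocus_vanishingIdeal_eq_closure,
          PrimeSpectrum.mem_zeroLocus]
        intro f hf
        apply hle
        rw [Submodule.mem_sInf]
        intro q hq
        exact (PrimeSpectrum.mem_vanishingIdeal T f).mp hf ⟨q, hS q hq⟩ hq
      have hTC : T ⊆ C := fun x hx => Set.mem_biUnion hx
        ((PrimeSpectrum.mem_zeroLocus _ _).mpr le_rfl)
      exact hCclosed.closure_subset_iff.mpr hTC h1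
    obtain ⟨q, hqS, hpq⟩ := Set.mem_iUnion₂.mp hpC
    exact ⟨q, hqS, (PrimeSpectrum.mem_zeroLocus _ _).mp hpq⟩
end

section
/- Every P.Z. ring satisfies the descending chain condition on prime ideals. -/
/-- Every P.Z. ring satisfies the descending chain condition on prime ideals. -/
theorem isPZ_dcc_primes (R : Type*) [CommRing R] (h : IsPZ R)
    (c : ℕ → Ideal R) (hprime : ∀ n, (c n).IsPrime)
    (hdesc : ∀ n, c (n + 1) ≤ c n) : ∃ n, ∀ m, n ≤ m → c m = c n := by
  have hanti : Antitone c := antitone_nat_of_succ_le hdesc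
  set q : Ideal R := ⨅ n, c n with hq
  have hqle : ∀ n, q ≤ c n := fun n => iInf_le _ n
  have hqp : q.IsPrime := by
    constructor
    · intro ht
      exact (hprime 0).ne_top (eq_top_iff.2 (ht ▸ hqle 0))
    · intro x y hxy
      by_contra hcon
      push_neg at hcon
      obtain ⟨hx, hy⟩ := hcon
      rw [hq, Ideal.mem_iInf] at hx hy hxy
      push_neg at hx hy
      obtain ⟨a, ha⟩ := hx
      obtain ⟨b, hb⟩ := hy
      rcases (hprime (max a b)).mem_or_mem (hxy (max a b)) with hmem | hmem
      · exact ha (hanti (le_max_left a b) hmem)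
      · exact hb (hanti (le_max_right a b) hmem)
  obtain ⟨q', ⟨n, rfl⟩, hle⟩ := h (Set.range c)
    (by rintro _ ⟨n, rfl⟩; exact hprime n) q hqp
    (by rw [sInf_range])
  exact ⟨n, fun m hm => le_antisymm (hanti hm) (hle.trans (hqle m))⟩
end

section
/- Every P.Z. ring has only finitely many maximal ideals. -/
theorem isPZ_finite_maximals (R : Type*) [CommRing R] (h : IsPZ R) :
    {m : Ideal R | m.IsMaximal}.Finite := by
  by_contra hinf
  rw [← Set.not_infinite, not_not] at hinf
  set T : Set (Ideal R) := {m : Ideal R | m.IsMaximal} with hT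
  haveI : Infinite T := hinf.to_subtype
  haveI : (Filter.cofinite : Filter T).NeBot := Filter.cofinite_neBot
  set U : Ultrafilter T := Ultrafilter.of Filter.cofinite with hU
  have hUc : (U : Filter T) ≤ Filter.cofinite := Ultrafilter.of_le _
  -- the prime ideal of elements lying in U-many maximal ideals
  set p : Ideal R :=
    { carrier := {x | {m : T | x ∈ (m : Ideal R)} ∈ U}
      add_mem' := by
        intro a b ha hb
        exact Filter.mem_of_superset (Filter.inter_mem ha hb)
          (fun m ⟨h1, h2⟩ => Ideal.add_mem _ h1 h2)
      zero_mem' := by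
        apply Filter.univ_mem'
        intro m
        exact Ideal.zero_mem _
      smul_mem' := by
        intro c x hx
        exact Filter.mem_of_superset hx (fun m hm => Ideal.mul_mem_left _ c hm) }
    with hp
  have hpmem : ∀ x : R, x ∈ p ↔ {m : T | x ∈ (m : Ideal R)} ∈ U := fun x => Iff.rfl
  have hprime : p.IsPrime := by
    constructor
    · intro htop
      have h1 : (1 : R) ∈ p := htop ▸ Submodule.mem_top
      rw [hpmem] at h1
      have : {m : T | (1 : R) ∈ (m : Ideal R)} = ∅ := by
        ext m
        simp only [Set.mem_setOf_eq, Set.mem_empty_iff_false, iff_false]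
        exact fun h1m => m.2.ne_top ((Ideal.eq_top_iff_one _).mpr h1m)
      rw [this] at h1
      exact (Filter.empty_notMem (U : Filter T)) h1
    · intro a b hab
      rw [hpmem] at hab
      have hsub : {m : T | a * b ∈ (m : Ideal R)} ⊆
          {m : T | a ∈ (m : Ideal R)} ∪ {m : T | b ∈ (m : Ideal R)} := by
        intro m hm
        exact (m.2.isPrime.mem_or_mem hm).imp id id
      have := Filter.mem_of_superset hab hsub
      rcases Ultrafilter.union_mem_iff.mp this with h1 | h1
      · exact Or.inl h1
      · exact Or.inr h1
  have hle : sInf T ≤ p := by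
    intro x hx
    rw [hpmem]
    apply Filter.univ_mem'
    intro m
    exact (Ideal.mem_sInf.mp hx) m.2
  obtain ⟨q, hqT, hqp⟩ := h T (fun q hq => hq.isPrime) p hprime hle
  -- sInf (T \ {q}) is not contained in q
  have hnot : ¬ sInf (T \ {q}) ≤ q := by
    intro hle'
    obtain ⟨q', hq', hq'q⟩ := h (T \ {q}) (fun r hr => hr.1.isPrime) q hqT.isPrime hle'
    exact hq'.2 (hq'.1.eq_of_le hqT.ne_top hq'q)
  have htop : q ⊔ sInf (T \ {q}) = ⊤ := hqT.1.2 _ (left_lt_sup.2 hnot)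
  obtain ⟨a, ha, b, hb, hab⟩ := Submodule.mem_sup.mp
    (htop ▸ Submodule.mem_top : (1 : R) ∈ q ⊔ sInf (T \ {q}))
  -- a ∈ p since a ∈ q ≤ p
  have hap : {m : T | a ∈ (m : Ideal R)} ∈ U := (hpmem a).mp (hqp ha)
  -- but a lies only in q among maximal ideals
  have hsing : {m : T | a ∈ (m : Ideal R)} ⊆ {⟨q, hqT⟩} := by
    intro m hm
    simp only [Set.mem_singleton_iff]
    by_contra hne
    have hbm : b ∈ (m : Ideal R) := Ideal.mem_sInf.mp hb ⟨m.2, fun e => hne (Subtype.ext e)⟩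
    have : (1 : R) ∈ (m : Ideal R) := by
      rw [← hab]; exact Ideal.add_mem _ hm hbm
    exact m.2.ne_top ((Ideal.eq_top_iff_one _).mpr this)
  have hsingU : ({⟨q, hqT⟩} : Set T) ∈ U := Filter.mem_of_superset hap hsing
  have hcof : ({⟨q, hqT⟩} : Set T)ᶜ ∈ U :=
    hUc ((Set.finite_singleton _).compl_mem_cofinite)
  have := Filter.inter_mem hsingU hcof
  rw [Set.inter_compl_self] at this
  exact (Filter.empty_notMem (U : Filter T)) this
end

section
/- A Boolean ring R is a P.Z. ring if and only if R is finite. -/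
section Aux

variable {R : Type*} [BooleanRing R]

lemma boolean_nilpotent_eq_zero {x : R} (h : IsNilpotent x) : x = 0 := by
  obtain ⟨n, hn⟩ := h
  have hpow : ∀ m : ℕ, x ^ (m + 1) = x := by
    intro m
    induction m with
    | zero => simp
    | succ k ih => rw [pow_succ, ih, BooleanRing.mul_self]
  cases n with
  | zero =>
    have h1 : (1 : R) = 0 := by simpa using hn
    calc x = x * 1 := by ring
    _ = x * 0 := by rw [h1]
    _ = 0 := by ring
  | succ k => rw [hpow k] at hn; exact hn

lemma boolean_one_sub_mem {p : Ideal R} (hp : p.IsPrime) {a : R} (ha : a ∉ p) :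
    1 - a ∈ p := by
  have h0 : a * (1 - a) = 0 := by
    have h := BooleanRing.mul_self a
    ring_nf
    rw [sq, h, sub_self]
  have : a * (1 - a) ∈ p := by rw [h0]; exact p.zero_mem
  rcases hp.mem_or_mem this with h | h
  · exact absurd h ha
  · exact h

lemma boolean_prime_le_eq {p q : Ideal R} (hp : p.IsPrime) (hq : q.IsPrime)
    (h : q ≤ p) : q = p := by
  by_contra hne
  obtain ⟨x, hxp, hxq⟩ : ∃ x ∈ p, x ∉ q := by
    by_contra hc
    push_neg at hc
    exact hne (le_antisymm h hc)
  have h1 : 1 - x ∈ q := boolean_one_sub_mem hq hxq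
  have : (1 : R) ∈ p := by
    have := p.add_mem hxp (h h1)
    simpa using this
  exact hp.ne_top (Ideal.eq_top_of_isUnit_mem _ this isUnit_one)

end Aux

/-- A Boolean ring is P.Z. iff it is finite. -/
theorem booleanRing_isPZ_iff_finite (R : Type*) [BooleanRing R] :
    IsPZ R ↔ Finite R := by
  constructor
  · intro hPZ
    -- Step 1: every prime has an "isolating" element
    have key : ∀ p : Ideal R, p.IsPrime →
        ∃ x, x ∉ p ∧ ∀ q : Ideal R, q.IsPrime → q ≠ p → x ∈ q := by
      intro p hp
      set S : Set (Ideal R) := {q | q.IsPrime ∧ q ≠ p} with hS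
      have hnole : ¬ sInf S ≤ p := by
        intro hle
        obtain ⟨q, hqS, hqle⟩ := hPZ S (fun q hq => hq.1) p hp hle
        exact hqS.2 (boolean_prime_le_eq hp hqS.1 hqle)
      obtain ⟨x, hxS, hxp⟩ := SetLike.not_le_iff_exists.mp hnole
      refine ⟨x, hxp, fun q hq hqne => ?_⟩
      exact (Ideal.mem_sInf.mp hxS) ⟨hq, hqne⟩
    classical
    set P := {p : Ideal R // p.IsPrime} with hP
    choose e he1 he2 using fun (p : P) => key p.1 p.2
    -- Step 2: span of all e p is ⊤
    have hspan : Ideal.span (Set.range e) = ⊤ := by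
      by_contra h
      obtain ⟨m, hm, hle⟩ := Ideal.exists_le_maximal _ h
      exact he1 ⟨m, hm.isPrime⟩
        (hle (Ideal.subset_span ⟨⟨m, hm.isPrime⟩, rfl⟩))
    have h1 : (1 : R) ∈ Ideal.span (Set.range e) := hspan ▸ trivial
    obtain ⟨t, hts, ht1⟩ := Submodule.mem_span_finite_of_mem_span h1
    -- Step 3: every prime misses some element of t
    have hx : ∀ q : P, ∃ x, x ∈ t ∧ x ∉ q.1 := by
      intro q
      by_contra hc
      push_neg at hc
      have : Ideal.span (↑t : Set R) ≤ q.1 :=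
        Ideal.span_le.mpr (fun x hxt => hc x hxt)
      exact q.2.ne_top (Ideal.eq_top_of_isUnit_mem _ (this ht1) isUnit_one)
    choose f hf1 hf2 using hx
    -- Step 4: P is finite
    have hPfin : Finite P := by
      have hinj : Function.Injective (fun q : P => (⟨f q, hf1 q⟩ : {x // x ∈ t})) := by
        intro q q' h
        simp only [Subtype.mk.injEq] at h
        obtain ⟨p, hep⟩ := hts (hf1 q)
        have hq : q = p := by
          by_contra hne
          exact hf2 q (hep ▸ he2 p q.1 q.2 (fun hh => hne (Subtype.ext hh)))
        have hq' : q' = p := by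
          by_contra hne
          refine hf2 q' ?_
          rw [← h]
          exact hep ▸ he2 p q'.1 q'.2 (fun hh => hne (Subtype.ext hh))
        rw [hq, hq']
      exact Finite.of_injective _ hinj
    -- Step 5: R embeds into P → Prop
    have hinjR : Function.Injective (fun a : R => fun p : P => a ∈ p.1) := by
      intro a b hab
      have hmem : ∀ p : Ideal R, p.IsPrime → a - b ∈ p := by
        intro p hp
        have hiff : a ∈ p ↔ b ∈ p := by
          have := congrFun hab ⟨p, hp⟩
          simp only [eq_iff_iff] at this
          exact this
        by_cases ha : a ∈ p
        · exact p.sub_mem ha (hiff.mp ha)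
        · have hb : b ∉ p := fun hb => ha (hiff.mpr hb)
          have h1a : 1 - a ∈ p := boolean_one_sub_mem hp ha
          have h1b : 1 - b ∈ p := boolean_one_sub_mem hp hb
          have := p.sub_mem h1b h1a
          simpa using this
      have : IsNilpotent (a - b) := nilpotent_iff_mem_prime.mpr hmem
      have := boolean_nilpotent_eq_zero this
      exact sub_eq_zero.mp this
    exact Finite.of_injective _ hinjR
  · intro hfin
    intro S hS p hp hle
    have hIfin : Finite (Ideal R) :=
      Finite.of_injective (fun I : Ideal R => (I : Set R)) SetLike.coe_injective
    have hSfin : S.Finite := Set.toFinite S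
    rw [← hSfin.coe_toFinset, ← Finset.inf_id_eq_sInf, hp.inf_le'] at hle
    obtain ⟨q, hq, hqle⟩ := hle
    exact ⟨q, hSfin.mem_toFinset.mp hq, hqle⟩
end

section
/- Let R be an integral domain with field of fractions K. Then K is generated as an R-algebra by a single element if and only if there exists a nonzero f ∈ R such that for every nonzero g ∈ R, f lies in the radical of the principal ideal (g). -/
open Polynomial

/-- Goldman domains: the fraction field is generated by one element as an
`R`-algebra iff there is a nonzero `f` lying in the radical of every nonzero
principal ideal. -/
theorem goldman_domain_iff (R : Type*) [CommRing R] [IsDomain R] :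
    (∃ x : FractionRing R, Algebra.adjoin R {x} = ⊤) ↔
      ∃ f : R, f ≠ 0 ∧ ∀ g : R, g ≠ 0 → f ∈ (Ideal.span {g}).radical := by
  set K := FractionRing R
  have hinj : Function.Injective (algebraMap R K) := IsFractionRing.injective R K
  constructor
  · rintro ⟨x, hx⟩
    obtain ⟨a, b, hb, rfl⟩ := IsFractionRing.div_surjective (A := R) x
    have hb0 : b ≠ 0 := nonZeroDivisors.ne_zero hb
    refine ⟨b, hb0, fun g hg => ?_⟩
    have hgK : (algebraMap R K) g ≠ 0 := fun h => hg (hinj (by simpa using h))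
    have hbK : (algebraMap R K) b ≠ 0 := fun h => hb0 (hinj (by simpa using h))
    have hmem : ((algebraMap R K) g)⁻¹ ∈
        Algebra.adjoin R {algebraMap R K a / algebraMap R K b} :=
      hx ▸ Algebra.mem_top
    rw [Algebra.adjoin_singleton_eq_range_aeval] at hmem
    obtain ⟨p, hp0⟩ := hmem
    set n := p.natDegree with hn
    set x : K := algebraMap R K a / algebraMap R K b with hxdef
    have hp : aeval x p = ((algebraMap R K) g)⁻¹ := hp0
    refine ⟨n, Ideal.mem_span_singleton.2 ⟨∑ i ∈ Finset.range (n + 1),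
      p.coeff i * a ^ i * b ^ (n - i), hinj ?_⟩⟩
    have key : (algebraMap R K b) ^ n * aeval x p
        = ∑ i ∈ Finset.range (n + 1),
          algebraMap R K (p.coeff i * a ^ i * b ^ (n - i)) := by
      rw [aeval_eq_sum_range, Finset.mul_sum]
      refine Finset.sum_congr rfl fun i hi => ?_
      have hin : i ≤ n := Nat.lt_succ_iff.1 (Finset.mem_range.1 hi)
      have hsplit : (algebraMap R K b) ^ n
          = (algebraMap R K b) ^ i * (algebraMap R K b) ^ (n - i) := by
        rw [← pow_add]; congr 1; omega
      rw [Algebra.smul_def, hxdef, div_pow, map_mul, map_mul, map_pow, map_pow, hsplit]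
      rw [div_eq_mul_inv]
      linear_combination (algebraMap R K (p.coeff i) * algebraMap R K a ^ i * algebraMap R K b ^ (n - i)) * mul_inv_cancel₀ (pow_ne_zero i hbK)
    have : (algebraMap R K b) ^ n * (algebraMap R K g * aeval x p)
        = algebraMap R K g * ∑ i ∈ Finset.range (n + 1),
          algebraMap R K (p.coeff i * a ^ i * b ^ (n - i)) := by
      rw [← key]; ring
    rw [hp, mul_inv_cancel₀ hgK, mul_one] at this
    rw [map_pow, this, map_mul, map_sum]
  · rintro ⟨f, hf0, hf⟩
    have hfK : (algebraMap R K) f ≠ 0 := fun h => hf0 (hinj (by simpa using h))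
    refine ⟨((algebraMap R K) f)⁻¹, ?_⟩
    rw [eq_top_iff]
    rintro y -
    obtain ⟨a, b, hb, rfl⟩ := IsFractionRing.div_surjective (A := R) y
    have hb0 : b ≠ 0 := nonZeroDivisors.ne_zero hb
    have hbK : (algebraMap R K) b ≠ 0 := fun h => hb0 (hinj (by simpa using h))
    obtain ⟨n, hn⟩ := hf b hb0
    obtain ⟨c, hc⟩ := Ideal.mem_span_singleton.1 hn
    have hx : ((algebraMap R K) f)⁻¹ ∈ Algebra.adjoin R {((algebraMap R K) f)⁻¹} :=
      Algebra.self_mem_adjoin_singleton R _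
    have heq : algebraMap R K a / algebraMap R K b
        = algebraMap R K (a * c) * (((algebraMap R K) f)⁻¹) ^ n := by
      have : (algebraMap R K f) ^ n = algebraMap R K b * algebraMap R K c := by
        rw [← map_pow, ← map_mul, hc]
      have hc0 : c ≠ 0 := by
        intro h; apply pow_ne_zero n hf0; rw [hc, h, mul_zero]
      have hcK : (algebraMap R K) c ≠ 0 := fun h => hc0 (hinj (by simpa using h))
      rw [map_mul, inv_pow]
      rw [this, mul_inv, div_eq_mul_inv]
      linear_combination (-(algebraMap R K a * (algebraMap R K b)⁻¹)) * mul_inv_cancel₀ hcK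
    rw [heq]
    exact mul_mem (Subalgebra.algebraMap_mem _ _) (pow_mem hx n)
end
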